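/- arXiv:1704.01360 — 2 statements merged into one kernel-verified Lean document; each statement's English description precedes it below -/
import Mathlib

section
/- For every γ ∈ [0,1], the function φ(t) = sin(γt)/sin t is nondecreasing on (0, π/2]; that is, for all s, t with 0 < s ≤ t ≤ π/2, one has sin(γs)/sin s ≤ sin(γt)/sin t. -/
/-!
The derivative of `φ x = sin (γ x) / sin x` is `g x / sin x ^ 2` with
`g x = γ cos (γ x) sin x - sin (γ x) cos x`. Now `g 0 = 0` and
`g' x = (1 - γ²) sin (γ x) sin x ≥ 0` on `[0, π]`, so `g ≥ 0` there and `φ` is monotone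
on `(0, π)`, which contains `(0, π/2]`.
-/

open Real Set

lemma hasDerivAt_mul_cos_mul_mul_sin_sub (γ x : ℝ) :
    HasDerivAt (fun y => γ * cos (γ * y) * sin y - sin (γ * y) * cos y)
      ((1 - γ ^ 2) * (sin (γ * x) * sin x)) x := by
  have hγx : HasDerivAt (fun y => γ * y) γ x := by
    simpa using (hasDerivAt_id x).const_mul γ
  refine (((hγx.cos.const_mul γ).mul (hasDerivAt_sin x)).sub
    (hγx.sin.mul (hasDerivAt_cos x))).congr_deriv ?_
  ring

lemma sin_mul_mul_cos_le {γ : ℝ} (hγ₀ : 0 ≤ γ) (hγ₁ : γ ≤ 1) {x : ℝ} (hx₀ : 0 ≤ x) (hxπ : x ≤ π) :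
    sin (γ * x) * cos x ≤ γ * cos (γ * x) * sin x := by
  have hmono : MonotoneOn (fun y => γ * cos (γ * y) * sin y - sin (γ * y) * cos y)
      (Icc 0 π) := by
    refine monotoneOn_of_hasDerivWithinAt_nonneg (convex_Icc 0 π)
      (fun y _ => (hasDerivAt_mul_cos_mul_mul_sin_sub γ y).continuousAt.continuousWithinAt)
      (fun y _ => (hasDerivAt_mul_cos_mul_mul_sin_sub γ y).hasDerivWithinAt) ?_
    rw [interior_Icc]
    rintro y ⟨hy₀, hyπ⟩
    have hγy : γ * y ≤ π := by nlinarith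
    have hγ_sq : 0 ≤ 1 - γ ^ 2 := by nlinarith
    exact mul_nonneg hγ_sq (mul_nonneg (sin_nonneg_of_nonneg_of_le_pi (by positivity) hγy)
      (sin_nonneg_of_nonneg_of_le_pi hy₀.le hyπ.le))
  have h := hmono ⟨le_rfl, pi_pos.le⟩ ⟨hx₀, hxπ⟩ hx₀
  simp only [mul_zero, sin_zero, cos_zero, mul_one, sub_zero] at h
  linarith

lemma hasDerivAt_sin_mul_div_sin {γ x : ℝ} (hx : sin x ≠ 0) :
    HasDerivAt (fun y => sin (γ * y) / sin y)
      ((γ * cos (γ * x) * sin x - sin (γ * x) * cos x) / sin x ^ 2) x := by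
  have hγx : HasDerivAt (fun y => γ * y) γ x := by
    simpa using (hasDerivAt_id x).const_mul γ
  refine (hγx.sin.div (hasDerivAt_sin x) hx).congr_deriv ?_
  ring

lemma monotoneOn_sin_mul_div_sin {γ : ℝ} (hγ₀ : 0 ≤ γ) (hγ₁ : γ ≤ 1) :
    MonotoneOn (fun x => sin (γ * x) / sin x) (Ioo 0 π) := by
  have hsin : ∀ x ∈ Ioo 0 π, sin x ≠ 0 := fun x hx => (sin_pos_of_pos_of_lt_pi hx.1 hx.2).ne'
  refine monotoneOn_of_hasDerivWithinAt_nonneg (convex_Ioo 0 π)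
    (fun x hx => (hasDerivAt_sin_mul_div_sin (hsin x hx)).continuousAt.continuousWithinAt)
    (fun x hx => (hasDerivAt_sin_mul_div_sin (hsin x (interior_subset hx))).hasDerivWithinAt)
    ?_
  rw [interior_Ioo]
  exact fun x hx => div_nonneg (sub_nonneg.2 (sin_mul_mul_cos_le hγ₀ hγ₁ hx.1.le hx.2.le))
    (sq_nonneg _)

/-- For `γ ∈ [0,1]`, the function `t ↦ sin (γ t) / sin t` is nondecreasing
on `(0, π/2]`. -/
theorem stmt_9 (γ : ℝ) (hγ : γ ∈ Set.Icc (0 : ℝ) 1)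
    (s t : ℝ) (hs : 0 < s) (hst : s ≤ t) (ht : t ≤ π / 2) :
    Real.sin (γ * s) / Real.sin s ≤ Real.sin (γ * t) / Real.sin t := by
  have htπ : t < π := ht.trans_lt (half_lt_self pi_pos)
  exact monotoneOn_sin_mul_div_sin hγ.1 hγ.2 ⟨hs, hst.trans_lt htπ⟩ ⟨hs.trans_le hst, htπ⟩ hst
end

section
/- Let {a_n}, {b_n}, and {c_n} be sequences in [0, π/2] such that cos(c_n)·cos(a_n) ≥ cos(b_n) for all n ∈ ℕ, lim_n (cos(a_n) - cos(b_n)) = 0, and sup_n b_n < π/2. Then lim_n c_n = 0. -/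
/-!
Put `ε = cos (sup b) > 0`, so that `cos bₙ ≥ ε`. Since `cos cₙ ∈ [0, 1]`, the inequality
`cos bₙ ≤ cos cₙ · cos aₙ` forces `cos aₙ ≥ cos bₙ ≥ ε` and then
`cos aₙ - cos bₙ ≥ cos aₙ (1 - cos cₙ) ≥ ε (1 - cos cₙ)`. Hence `cos cₙ → 1`, and `cₙ → 0` because
`arccos` is a continuous inverse of `cos` on `[0, π]`.
-/

open Filter Real Topology

lemma mul_one_sub_le_sub_of_le_mul {x y z ε : ℝ} (hε : 0 < ε) (hy₀ : 0 ≤ y) (hy₁ : y ≤ 1)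
    (hεz : ε ≤ z) (hzyx : z ≤ y * x) : ε * (1 - y) ≤ x - z := by
  have hx : 0 < x := pos_of_mul_pos_right (hε.trans_le (hεz.trans hzyx)) hy₀
  have hεx : ε ≤ x := by nlinarith
  nlinarith

lemma tendsto_one_of_mul_one_sub_le {α : Type*} {l : Filter α} {f w : α → ℝ} {ε : ℝ}
    (hε : 0 < ε) (hf : Tendsto f l (𝓝 0)) (hw : ∀ x, w x ≤ 1) (h : ∀ x, ε * (1 - w x) ≤ f x) :
    Tendsto w l (𝓝 1) := by
  have hlow : Tendsto (fun x => 1 - f x / ε) l (𝓝 1) := by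
    simpa using (hf.div_const ε).const_sub 1
  refine tendsto_of_tendsto_of_tendsto_of_le_of_le hlow tendsto_const_nhds (fun x => ?_) hw
  rw [sub_le_comm, le_div_iff₀ hε]
  linarith [h x]

lemma Real.tendsto_of_tendsto_cos {α : Type*} {l : Filter α} {c : α → ℝ} {y : ℝ}
    (hc : ∀ x, c x ∈ Set.Icc 0 π) (hy : y ∈ Set.Icc 0 π)
    (hcos : Tendsto (fun x => cos (c x)) l (𝓝 (cos y))) : Tendsto c l (𝓝 y) := by
  have h := (continuous_arccos.tendsto (cos y)).comp hcos
  rwa [arccos_cos hy.1 hy.2, Function.comp_def,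
    funext fun x => arccos_cos (hc x).1 (hc x).2] at h

theorem stmt_15_general (a b c : ℕ → ℝ)
    (hb : ∀ n, b n ∈ Set.Icc (0 : ℝ) (π / 2))
    (hc : ∀ n, c n ∈ Set.Icc (0 : ℝ) (π / 2))
    (hfirm : ∀ n, Real.cos (b n) ≤ Real.cos (c n) * Real.cos (a n))
    (hlim : Tendsto (fun n => Real.cos (a n) - Real.cos (b n)) atTop (nhds 0))
    (hsup : iSup b < π / 2) :
    Tendsto c atTop (nhds 0) := by
  have hb_le : ∀ n, b n ≤ iSup b := le_ciSup ⟨π / 2, by rintro _ ⟨n, rfl⟩; exact (hb n).2⟩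
  have hε : 0 < cos (iSup b) :=
    cos_pos_of_mem_Ioo ⟨by linarith [pi_pos, (hb 0).1, hb_le 0], hsup⟩
  have hc' : ∀ n, c n ∈ Set.Icc 0 π := fun n => ⟨(hc n).1, by linarith [(hc n).2, pi_pos]⟩
  have hcos_b : ∀ n, cos (iSup b) ≤ cos (b n) := fun n =>
    cos_le_cos_of_nonneg_of_le_pi (hb n).1 (by linarith [pi_pos, hb_le n]) (hb_le n)
  have hcos_c_nonneg : ∀ n, 0 ≤ cos (c n) := fun n =>
    cos_nonneg_of_mem_Icc ⟨by linarith [(hc n).1, pi_pos], (hc n).2⟩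
  have hgap : ∀ n, cos (iSup b) * (1 - cos (c n)) ≤ cos (a n) - cos (b n) := fun n =>
    mul_one_sub_le_sub_of_le_mul hε (hcos_c_nonneg n) (cos_le_one _) (hcos_b n) (hfirm n)
  have hcos_c : Tendsto (fun n => cos (c n)) atTop (𝓝 (cos 0)) := by
    rw [cos_zero]
    exact tendsto_one_of_mul_one_sub_le hε hlim (fun n => cos_le_one _) hgap
  exact tendsto_of_tendsto_cos hc' ⟨le_rfl, pi_pos.le⟩ hcos_c

/-- If `a b c` are sequences in `[0, π/2]` with `cos (c n) * cos (a n) ≥ cos (b n)`,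
`cos (a n) - cos (b n) → 0`, and `sup_n b_n < π/2`, then `c n → 0`. -/
theorem stmt_15 (a b c : ℕ → ℝ)
    (ha : ∀ n, a n ∈ Set.Icc (0 : ℝ) (π / 2))
    (hb : ∀ n, b n ∈ Set.Icc (0 : ℝ) (π / 2))
    (hc : ∀ n, c n ∈ Set.Icc (0 : ℝ) (π / 2))
    (hfirm : ∀ n, Real.cos (b n) ≤ Real.cos (c n) * Real.cos (a n))
    (hlim : Tendsto (fun n => Real.cos (a n) - Real.cos (b n)) atTop (nhds 0))
    (hsup : iSup b < π / 2) :
    Tendsto c atTop (nhds 0) :=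
  stmt_15_general a b c hb hc hfirm hlim hsup
end
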